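/- arXiv:1304.4173 — 2 statements merged into one kernel-verified Lean document; each statement's English description precedes it below -/
import Mathlib

section
/- Let R be a Noetherian local ring with maximal ideal p and let I be an injective hull of the residue field R/p. Then the functor Hom_R(−, I) is a faithful exact functor on the category of finitely generated R-modules. -/
/-!
Exactness of `Hom_R(-, I)` at `f, g` only needs `I` injective: maps out of the image of `g`
extend to its codomain, which reduces to left exactness of `Hom` for surjective `g`. Faithfulness needs the embedding
`R/p ↪ I`: for `x ≠ 0` the cyclic module `R ∙ x ≅ R/ann(x)` surjects onto `R/p`, and the
resulting map `R ∙ x → I`, which does not kill `x`, extends to the whole module.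
-/

open IsLocalRing

/-- `I` is an injective hull of the residue field `k = R/p` of the local ring `(R, p)`:
`I` is an injective `R`-module containing `k` such that every nonzero submodule of `I`
meets (the image of) `k` nontrivially. -/
def IsInjectiveHullOfResidueField (R : Type*) [CommRing R] [IsLocalRing R]
    (I : Type*) [AddCommGroup I] [Module R I] : Prop :=
  Module.Injective R I ∧
  ∃ ι : (R ⧸ maximalIdeal R) →ₗ[R] I, Function.Injective ι ∧
    ∀ N : Submodule R I, N ≠ ⊥ → N ⊓ LinearMap.range ι ≠ ⊥

universe u v

namespace LinearMap

variable {R : Type u} [CommRing R] (N : Type v) [AddCommGroup N] [Module R N]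
  {M₁ M₂ M₃ : Type*} [AddCommGroup M₁] [AddCommGroup M₂] [AddCommGroup M₃]
  [Module R M₁] [Module R M₂] [Module R M₃]

theorem lcomp_ne_zero_of_separating (hN : ∀ x : M₂, x ≠ 0 → ∃ φ : M₂ →ₗ[R] N, φ x ≠ 0)
    {f : M₁ →ₗ[R] M₂} (hf : f ≠ 0) : lcomp R N f ≠ 0 := by
  obtain ⟨x, hx⟩ : ∃ x, f x ≠ 0 := by simpa [LinearMap.ext_iff] using hf
  obtain ⟨φ, hφ⟩ := hN (f x) hx
  exact fun h ↦ hφ (LinearMap.congr_fun (LinearMap.congr_fun h φ) x)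

section Injective

variable [Small.{v} R] [Module.Injective R N]

theorem lcomp_surjective_of_injective {f : M₁ →ₗ[R] M₂} (hf : Function.Injective f) :
    Function.Surjective (lcomp R N f) := fun g ↦
  Module.Injective.extension_property R N M₁ M₂ f hf g

theorem exact_lcomp_of_exact {f : M₁ →ₗ[R] M₂} {g : M₂ →ₗ[R] M₃} (hfg : Function.Exact f g) :
    Function.Exact (lcomp R N g) (lcomp R N f) := by
  have hfg' : Function.Exact f g.rangeRestrict :=
    (Subtype.val_injective.comp_exact_iff_exact (i := (range g).subtype)).mp hfg
  have hcomp : lcomp R N g = lcomp R N g.rangeRestrict ∘ₗ lcomp R N (range g).subtype := rfl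
  rw [hcomp, (lcomp_surjective_of_injective N (range g).injective_subtype).comp_exact_iff_exact]
  exact exact_lcomp_of_exact_of_surjective N hfg' g.surjective_rangeRestrict

end Injective

end LinearMap

namespace IsLocalRing

variable {R : Type u} [CommRing R] [IsLocalRing R] {N : Type v} [AddCommGroup N] [Module R N]
  [Small.{v} R] [Module.Injective R N] {M : Type*} [AddCommGroup M] [Module R M]

theorem exists_apply_ne_zero_of_residueField_embedding {ι : R ⧸ maximalIdeal R →ₗ[R] N}
    (hι : Function.Injective ι) {x : M} (hx : x ≠ 0) : ∃ φ : M →ₗ[R] N, φ x ≠ 0 := by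
  have hle : Ideal.torsionOf R M x ≤ maximalIdeal R :=
    le_maximalIdeal ((Ideal.torsionOf_eq_top_iff (R := R) x).not.mpr hx)
  let e := Ideal.quotTorsionOfEquivSpanSingleton R M x
  obtain ⟨φ, hφ⟩ := Module.Injective.extension_property R N _ M (R ∙ x).subtype
    (R ∙ x).injective_subtype (ι ∘ₗ Submodule.factor hle ∘ₗ e.symm.toLinearMap)
  refine ⟨φ, ?_⟩
  have hex : e.symm ⟨x, Submodule.mem_span_singleton_self x⟩ = Submodule.Quotient.mk 1 := by
    rw [LinearEquiv.symm_apply_eq, Ideal.quotTorsionOfEquivSpanSingleton_apply_mk, one_smul]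
  have hφx := LinearMap.congr_fun hφ ⟨x, Submodule.mem_span_singleton_self x⟩
  simp only [LinearMap.comp_apply, Submodule.subtype_apply, LinearEquiv.coe_coe, hex] at hφx
  rw [hφx, ← Submodule.mkQ_apply, Submodule.factor_mk, map_ne_zero_iff ι hι]
  exact one_ne_zero

end IsLocalRing

theorem matlisDual_faithful_exact_general
    (R : Type) [CommRing R] [IsLocalRing R]
    (I : Type) [AddCommGroup I] [Module R I]
    (hI : IsInjectiveHullOfResidueField R I) :
    (∀ (A B : Type) [AddCommGroup A] [AddCommGroup B] [Module R A] [Module R B]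
        [Module.Finite R A] [Module.Finite R B] (f : A →ₗ[R] B),
        Function.Injective f → Function.Surjective (LinearMap.lcomp R I f)) ∧
    (∀ (A B : Type) [AddCommGroup A] [AddCommGroup B] [Module R A] [Module R B]
        [Module.Finite R A] [Module.Finite R B] (f : A →ₗ[R] B),
        Function.Surjective f → Function.Injective (LinearMap.lcomp R I f)) ∧
    (∀ (A B C : Type) [AddCommGroup A] [AddCommGroup B] [AddCommGroup C]
        [Module R A] [Module R B] [Module R C]
        [Module.Finite R A] [Module.Finite R B] [Module.Finite R C]
        (f : A →ₗ[R] B) (g : B →ₗ[R] C), Function.Exact f g →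
        Function.Exact (LinearMap.lcomp R I g) (LinearMap.lcomp R I f)) ∧
    (∀ (A B : Type) [AddCommGroup A] [AddCommGroup B] [Module R A] [Module R B]
        [Module.Finite R A] [Module.Finite R B] (f : A →ₗ[R] B),
        f ≠ 0 → LinearMap.lcomp R I f ≠ 0) := by
  obtain ⟨_, ι, hι, -⟩ := hI
  refine ⟨?_, ?_, ?_, ?_⟩
  · intro A B _ _ _ _ _ _ f hf
    exact LinearMap.lcomp_surjective_of_injective I hf
  · intro A B _ _ _ _ _ _ f hf
    exact LinearMap.lcomp_injective_of_surjective f hf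
  · intro A B C _ _ _ _ _ _ _ _ _ f g hfg
    exact LinearMap.exact_lcomp_of_exact I hfg
  · intro A B _ _ _ _ _ _ f hf
    exact LinearMap.lcomp_ne_zero_of_separating I
      (fun _ hx ↦ exists_apply_ne_zero_of_residueField_embedding hι hx) hf

/-- **Matlis duality.** Let `R` be a Noetherian local ring with maximal ideal `p` and `I` an
injective hull of the residue field `R/p`.  Then `Hom_R(−, I)` is a faithful exact functor on
finitely generated `R`-modules: it sends injections to surjections, surjections to
injections, exact pairs to exact pairs, and nonzero maps to nonzero maps. -/
theorem matlisDual_faithful_exact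
    (R : Type) [CommRing R] [IsLocalRing R] [IsNoetherianRing R]
    (I : Type) [AddCommGroup I] [Module R I]
    (hI : IsInjectiveHullOfResidueField R I) :
    (∀ (A B : Type) [AddCommGroup A] [AddCommGroup B] [Module R A] [Module R B]
        [Module.Finite R A] [Module.Finite R B] (f : A →ₗ[R] B),
        Function.Injective f → Function.Surjective (LinearMap.lcomp R I f)) ∧
    (∀ (A B : Type) [AddCommGroup A] [AddCommGroup B] [Module R A] [Module R B]
        [Module.Finite R A] [Module.Finite R B] (f : A →ₗ[R] B),
        Function.Surjective f → Function.Injective (LinearMap.lcomp R I f)) ∧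
    (∀ (A B C : Type) [AddCommGroup A] [AddCommGroup B] [AddCommGroup C]
        [Module R A] [Module R B] [Module R C]
        [Module.Finite R A] [Module.Finite R B] [Module.Finite R C]
        (f : A →ₗ[R] B) (g : B →ₗ[R] C), Function.Exact f g →
        Function.Exact (LinearMap.lcomp R I g) (LinearMap.lcomp R I f)) ∧
    (∀ (A B : Type) [AddCommGroup A] [AddCommGroup B] [Module R A] [Module R B]
        [Module.Finite R A] [Module.Finite R B] (f : A →ₗ[R] B),
        f ≠ 0 → LinearMap.lcomp R I f ≠ 0) :=
  matlisDual_faithful_exact_general R I hI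
end

section
/- Let α: F → G• and γ: G• → H• be morphisms in a derived category of sheaves with F a sheaf (concentrated in degree 0), such that the composition β = γ∘α is a quasi-isomorphism and H^i(G•) = 0 for i ≠ 0 with H^0(G•) a rank one torsion-free sheaf. If the induced map H^0(γ) is injective, then γ and α are both quasi-isomorphisms. -/
open CategoryTheory CategoryTheory.Limits DerivedCategory

def IsRankOneTorsionFree (R : Type) [CommRing R] [IsDomain R]
    (N : Type*) [AddCommGroup N] [Module R N] : Prop :=
  NoZeroSMulDivisors R N ∧ Nontrivial N ∧
    ∀ x y : N, ∃ a b : R, ¬(a = 0 ∧ b = 0) ∧ a • x = b • y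

lemma CategoryTheory.isIso_of_mono_of_isIso_comp {C : Type*} [Category C] {X Y Z : C}
    (f : X ⟶ Y) (g : Y ⟶ Z) [IsIso (f ≫ g)] [Mono g] : IsIso g :=
  have : IsSplitEpi g := IsSplitEpi.mk' ⟨inv (f ≫ g) ≫ f, by simp⟩
  isIso_of_mono_of_isSplitEpi g

lemma DerivedCategory.isIso_of_isIso_comp_of_mono_homologyMap
    {C : Type*} [Category C] [Abelian C] [HasDerivedCategory C]
    {X Y Z : DerivedCategory C} (f : X ⟶ Y) (g : Y ⟶ Z) [IsIso (f ≫ g)]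
    (hg : ∀ n : ℤ, Mono ((homologyFunctor C n).map g)) : IsIso g := by
  rw [isIso_iff]
  intro n
  have : IsIso ((homologyFunctor C n).map f ≫ (homologyFunctor C n).map g) := by
    rw [← Functor.map_comp]
    infer_instance
  have := hg n
  exact isIso_of_mono_of_isIso_comp ((homologyFunctor C n).map f) _

theorem quasiIso_of_factorization_through_rank_one_general
    (R : Type) [CommRing R]
    [HasDerivedCategory.{1} (ModuleCat.{0} R)]
    (F : ModuleCat R) (G H : DerivedCategory (ModuleCat R))
    (α : (singleFunctor (ModuleCat R) 0).obj F ⟶ G) (γ : G ⟶ H)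
    (hβ : IsIso (α ≫ γ))
    (hG : ∀ i : ℤ, i ≠ 0 → IsZero ((homologyFunctor (ModuleCat R) i).obj G))
    (hmono : Mono ((homologyFunctor (ModuleCat R) 0).map γ)) :
    IsIso γ ∧ IsIso α := by
  have hγ : IsIso γ := by
    refine isIso_of_isIso_comp_of_mono_homologyMap α γ fun n => ?_
    obtain rfl | hn := eq_or_ne n 0
    · exact hmono
    · exact (hG n hn).mono _
  exact ⟨hγ, IsIso.of_isIso_comp_right α γ⟩

/-- Let `α : F → G•` and `γ : G• → H•` be morphisms in a derived category (of sheaves of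
modules) with `F` a sheaf concentrated in degree `0`, such that the composition
`β = γ ∘ α` is a quasi-isomorphism, `H^i(G•) = 0` for `i ≠ 0`, and `H^0(G•)` is a rank one
torsion-free sheaf.  If the induced map `H^0(γ)` is injective, then `γ` and `α` are both
quasi-isomorphisms. -/
theorem quasiIso_of_factorization_through_rank_one
    (R : Type) [CommRing R] [IsDomain R]
    [HasDerivedCategory.{1} (ModuleCat.{0} R)]
    (F : ModuleCat R) (G H : DerivedCategory (ModuleCat R))
    (α : (singleFunctor (ModuleCat R) 0).obj F ⟶ G) (γ : G ⟶ H)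
    (hβ : IsIso (α ≫ γ))
    (hG : ∀ i : ℤ, i ≠ 0 → IsZero ((homologyFunctor (ModuleCat R) i).obj G))
    (hN : IsRankOneTorsionFree R ((homologyFunctor (ModuleCat R) 0).obj G))
    (hmono : Mono ((homologyFunctor (ModuleCat R) 0).map γ)) :
    IsIso γ ∧ IsIso α :=
  quasiIso_of_factorization_through_rank_one_general R F G H α γ hβ hG hmono
end
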